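/- (Lemma 1, increasing case.) Suppose Ψ_s > Ψ_w and A_s ≤ C_w. Then P = C_w maximizes the per-cell sum rate over the feasible interval: for every P with A_s ≤ P ≤ C_w, R_s(P) + R_w(P) ≤ R_s(C_w) + R_w(C_w). -/

import Mathlib

/-! Substituting `R_w(P) = (B/2) log₂((1 + Ψ_w p)/(1 + Ψ_w P))`, the sum rate becomes
`(B/2) log₂((1 + Ψ_w p) · (1 + Ψ_s P)/(1 + Ψ_w P))`, and `(1 + Ψ_s P)/(1 + Ψ_w P)` is
nondecreasing for `P ≥ 0` once `Ψ_s ≥ Ψ_w`, so the sum rate is largest at the right end `C_w`. -/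

open Real Set

lemma one_add_mul_sub_div_one_add_mul {a x : ℝ} (p : ℝ) (hx : 1 + a * x ≠ 0) :
    1 + a * (p - x) / (1 + a * x) = (1 + a * p) / (1 + a * x) := by
  field_simp
  ring

lemma monotoneOn_one_add_mul_div_one_add_mul {a b : ℝ} (hb : 0 ≤ b) (hba : b ≤ a) :
    MonotoneOn (fun x => (1 + a * x) / (1 + b * x)) (Ici 0) := by
  intro x (hx : 0 ≤ x) y (hy : 0 ≤ y) hxy
  rw [div_le_div_iff₀ (by positivity) (by positivity)]
  nlinarith [mul_nonneg (sub_nonneg.2 hba) (sub_nonneg.2 hxy)]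

lemma sum_rate_eq {B p Ψs Ψw P : ℝ} (hp : 0 < p) (hΨs : 0 < Ψs) (hΨw : 0 < Ψw) (hP : 0 ≤ P) :
    B / 2 * logb 2 (1 + Ψs * P) + B / 2 * logb 2 (1 + Ψw * (p - P) / (1 + Ψw * P)) =
      B / 2 * logb 2 ((1 + Ψw * p) * ((1 + Ψs * P) / (1 + Ψw * P))) := by
  have hwP : 0 < 1 + Ψw * P := by positivity
  rw [one_add_mul_sub_div_one_add_mul p hwP.ne', ← mul_add,
    ← logb_mul (by positivity) (by positivity)]
  congr 2
  field_simp

theorem stmt_4_general (B p Ψs Ψw Rth : ℝ) (hB : 0 < B) (hp : 0 < p)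
    (hΨs : 0 < Ψs) (hΨw : 0 < Ψw) (h : Ψs > Ψw)
    (As Cw : ℝ)
    (hAs : As = max 0 (((2 : ℝ) ^ (2 * Rth / B) - 1) / Ψs)) :
    ∀ P : ℝ, As ≤ P → P ≤ Cw →
      (B / 2 * Real.logb 2 (1 + Ψs * P) +
        B / 2 * Real.logb 2 (1 + Ψw * (p - P) / (1 + Ψw * P))) ≤
      (B / 2 * Real.logb 2 (1 + Ψs * Cw) +
        B / 2 * Real.logb 2 (1 + Ψw * (p - Cw) / (1 + Ψw * Cw))) := by
  intro P hAsP hPCw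
  have hP : 0 ≤ P := (hAs ▸ le_max_left _ _ : 0 ≤ As).trans hAsP
  have hCw : 0 ≤ Cw := hP.trans hPCw
  rw [sum_rate_eq hp hΨs hΨw hP, sum_rate_eq hp hΨs hΨw hCw]
  have hratio := monotoneOn_one_add_mul_div_one_add_mul hΨw.le h.le hP hCw hPCw
  gcongr
  norm_num

/-- Lemma 1, increasing case: if `Ψ_s > Ψ_w` and `A_s ≤ C_w`,
then `P = C_w` maximizes `R_s(P) + R_w(P)` over `[A_s, C_w]`. -/
theorem stmt_4 (B p Ψs Ψw Rth : ℝ) (hB : 0 < B) (hp : 0 < p)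
    (hΨs : 0 < Ψs) (hΨw : 0 < Ψw) (hRth : 0 ≤ Rth) (h : Ψs > Ψw)
    (As Cw : ℝ)
    (hAs : As = max 0 (((2 : ℝ) ^ (2 * Rth / B) - 1) / Ψs))
    (hCw : Cw = min (p / 2) ((1 + Ψw * p) / (Ψw * (2 : ℝ) ^ (2 * Rth / B)) - 1 / Ψw))
    (hfeas : As ≤ Cw) :
    ∀ P : ℝ, As ≤ P → P ≤ Cw →
      (B / 2 * Real.logb 2 (1 + Ψs * P) +
        B / 2 * Real.logb 2 (1 + Ψw * (p - P) / (1 + Ψw * P))) ≤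
      (B / 2 * Real.logb 2 (1 + Ψs * Cw) +
        B / 2 * Real.logb 2 (1 + Ψw * (p - Cw) / (1 + Ψw * Cw))) :=
  stmt_4_general B p Ψs Ψw Rth hB hp hΨs hΨw h As Cw hAs
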